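/- Let z be a bounded real sequence and a ∈ ℝ. Then the iterated Cesàro means C(Cz) converge to a if and only if the Cesàro means Cz converge to a. In particular, for a bounded sequence z, convergence of C²z implies convergence of Cz. -/
import Mathlib


open scoped BigOperators

/-- Membership in `l_∞`: the sequence is bounded. -/
def Bdd (x : ℕ → ℝ) : Prop := ∃ M : ℝ, ∀ n : ℕ, |x n| ≤ M

/-- The Cesàro operator `C` on sequences: `(Cx)_n = (1/(n+1)) Σ_{k=0}^n x_k`. -/
noncomputable def Ces (x : ℕ → ℝ) : ℕ → ℝ := fun n =>
  (∑ k ∈ Finset.range (n + 1), x k) / ((n : ℝ) + 1)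

lemma ces_tendsto {x : ℕ → ℝ} {a : ℝ} (h : Filter.Tendsto x Filter.atTop (nhds a)) :
    Filter.Tendsto (Ces x) Filter.atTop (nhds a) := by
  have h2 := (h.cesaro).comp (Filter.tendsto_add_atTop_nat 1)
  have : Ces x = (fun n : ℕ => ((n:ℝ))⁻¹ * ∑ i ∈ Finset.range n, x i) ∘ (fun n => n + 1) := by
    funext n
    simp only [Ces, Function.comp, div_eq_inv_mul]
    push_cast
    ring_nf
  rw [this]
  exact h2

lemma ces_abs_le {x : ℕ → ℝ} {M : ℝ} (hM : ∀ n, |x n| ≤ M) (n : ℕ) : |Ces x n| ≤ M := by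
  have hnp : (0:ℝ) < (n:ℝ) + 1 := by positivity
  have : |∑ k ∈ Finset.range (n + 1), x k| ≤ ((n:ℝ)+1) * M := by
    calc |∑ k ∈ Finset.range (n + 1), x k| ≤ ∑ k ∈ Finset.range (n + 1), |x k| :=
      Finset.abs_sum_le_sum_abs _ _
    _ ≤ ∑ k ∈ Finset.range (n + 1), M := Finset.sum_le_sum fun k _ => hM k
    _ = ((n:ℝ)+1) * M := by rw [Finset.sum_const, Finset.card_range, nsmul_eq_mul]; push_cast; ring
  rw [Ces, abs_div, abs_of_pos hnp, div_le_iff₀ hnp]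
  linarith [this]

lemma ces_step (x : ℕ → ℝ) (k : ℕ) :
    Ces x (k + 1) - Ces x k = (x (k + 1) - Ces x k) / ((k:ℝ) + 2) := by
  have h1 : (0:ℝ) < (k:ℝ) + 1 := by positivity
  have h2 : (0:ℝ) < (k:ℝ) + 2 := by positivity
  have hsum : ∑ j ∈ Finset.range (k + 1 + 1), x j
      = (∑ j ∈ Finset.range (k + 1), x j) + x (k + 1) := Finset.sum_range_succ _ _
  rw [Ces, Ces, hsum]
  push_cast
  field_simp
  ring

lemma ces_diff {z : ℕ → ℝ} {M : ℝ} (hM : ∀ n, |z n| ≤ M) (n k : ℕ) :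
    |Ces z (n + k) - Ces z n| ≤ 2 * M * k / ((n:ℝ) + 1) := by
  have hM0 : 0 ≤ M := (abs_nonneg _).trans (hM 0)
  induction k with
  | zero => simp
  | succ k ih =>
      have hstep : |Ces z (n + k + 1) - Ces z (n + k)| ≤ 2 * M / ((n:ℝ) + 1) := by
        rw [ces_step]
        have hd : (0:ℝ) < (↑(n+k):ℝ) + 2 := by positivity
        have hnum : |z (n + k + 1) - Ces z (n + k)| ≤ 2 * M := by
          calc |z (n + k + 1) - Ces z (n + k)| ≤ |z (n+k+1)| + |Ces z (n+k)| := abs_sub _ _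
          _ ≤ M + M := add_le_add (hM _) (ces_abs_le hM _)
          _ = 2 * M := by ring
        rw [abs_div, abs_of_pos hd]
        have hle : (n:ℝ) + 1 ≤ (↑(n+k):ℝ) + 2 := by
          push_cast
          have : (0:ℝ) ≤ (k:ℝ) := Nat.cast_nonneg k
          linarith
        calc |z (n + k + 1) - Ces z (n + k)| / ((↑(n+k):ℝ) + 2)
            ≤ (2*M) / ((↑(n+k):ℝ) + 2) := by gcongr
          _ ≤ 2 * M / ((n:ℝ) + 1) := by gcongr
      have : |Ces z (n + (k+1)) - Ces z n| ≤ |Ces z (n + k + 1) - Ces z (n + k)| + |Ces z (n + k) - Ces z n| := by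
        have : n + (k+1) = n + k + 1 := by ring
        rw [this]
        exact abs_sub_le _ _ _
      calc |Ces z (n + (k+1)) - Ces z n| ≤ 2 * M / ((n:ℝ)+1) + 2*M*k/((n:ℝ)+1) := by
            linarith [this, hstep, ih]
        _ = 2 * M * (↑(k+1):ℝ) / ((n:ℝ)+1) := by push_cast; ring

set_option maxHeartbeats 1000000 in
lemma tauberian {y : ℕ → ℝ} {K : ℝ} (hK : 0 ≤ K)
    (hdiff : ∀ n k : ℕ, |y (n + k) - y n| ≤ K * k / ((n:ℝ) + 1))
    {a : ℝ} (ha : Filter.Tendsto (Ces y) Filter.atTop (nhds a)) :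
    Filter.Tendsto y Filter.atTop (nhds a) := by
  rw [Metric.tendsto_atTop] at ha ⊢
  intro ε hε
  obtain ⟨δ, hδ, hδdef⟩ : ∃ δ : ℝ, 0 < δ ∧ δ = ε / (4 * (K + 1)) := ⟨_, by positivity, rfl⟩
  obtain ⟨C, hC, hCdef⟩ : ∃ C : ℝ, 0 < C ∧ C = 2 / δ + 1 := ⟨_, by positivity, rfl⟩
  obtain ⟨ε'', hε'', hε''def⟩ : ∃ e : ℝ, 0 < e ∧ e = ε / (2 * C) := ⟨_, by positivity, rfl⟩
  obtain ⟨N2, hN2⟩ := ha ε'' hε''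
  obtain ⟨N1, hN1⟩ := exists_nat_gt (4 * K / ε)
  refine ⟨max N1 N2, fun n hn => ?_⟩
  have hnN1 : N1 ≤ n := le_trans (le_max_left _ _) hn
  have hnN2 : N2 ≤ n := le_trans (le_max_right _ _) hn
  have hn1 : (0:ℝ) < (n:ℝ) + 1 := by positivity
  obtain ⟨q, hq1, hqlb, hqub⟩ : ∃ q : ℕ, 1 ≤ q ∧ δ * ((n:ℝ) + 1) ≤ (q:ℝ) ∧
      (q:ℝ) ≤ δ * ((n:ℝ) + 1) + 1 :=
    ⟨⌈δ * ((n:ℝ) + 1)⌉₊, Nat.one_le_ceil_iff.2 (by positivity), Nat.le_ceil _,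
      le_of_lt (Nat.ceil_lt_add_one (by positivity))⟩
  have hqpos : (0:ℝ) < (q:ℝ) := by exact_mod_cast hq1
  have hq0 : (q:ℝ) ≠ 0 := hqpos.ne'
  obtain ⟨m, hmdef⟩ : ∃ m : ℕ, m = n + q := ⟨_, rfl⟩
  have hm : (m:ℝ) = (n:ℝ) + (q:ℝ) := by rw [hmdef]; push_cast; ring
  set S : ℕ → ℝ := fun j => ∑ k ∈ Finset.range (j + 1), y k with hSdef
  have hSces : ∀ j : ℕ, S j = ((j:ℝ) + 1) * Ces y j := by
    intro j
    have : ((j:ℝ) + 1) ≠ 0 := by positivity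
    simp only [hSdef, Ces]
    field_simp
  have key1 : S m - S n = ∑ j ∈ Finset.range q, y (n + 1 + j) := by
    have h1 : n + 1 ≤ m + 1 := by omega
    simp only [hSdef]
    rw [← Finset.sum_Ico_eq_sub _ h1, Finset.sum_Ico_eq_sum_range]
    have h2 : m + 1 - (n + 1) = q := by omega
    rw [h2]
  have key2 : |S m - S n - (q:ℝ) * y n| ≤ K * q * q / ((n:ℝ) + 1) := by
    rw [key1]
    have hsub : (∑ j ∈ Finset.range q, y (n + 1 + j)) - (q:ℝ) * y n
        = ∑ j ∈ Finset.range q, (y (n + 1 + j) - y n) := by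
      rw [Finset.sum_sub_distrib, Finset.sum_const, Finset.card_range, nsmul_eq_mul]
    rw [hsub]
    calc |∑ j ∈ Finset.range q, (y (n + 1 + j) - y n)|
        ≤ ∑ j ∈ Finset.range q, |y (n + 1 + j) - y n| := Finset.abs_sum_le_sum_abs _ _
      _ ≤ ∑ _j ∈ Finset.range q, K * q / ((n:ℝ) + 1) := by
          apply Finset.sum_le_sum
          intro j hj
          have hj' : j + 1 ≤ q := Finset.mem_range.1 hj
          have h0 : n + 1 + j = n + (j + 1) := by omega
          rw [h0]
          calc |y (n + (j+1)) - y n| ≤ K * (↑(j+1):ℝ) / ((n:ℝ) + 1) := hdiff n (j+1)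
            _ ≤ K * (q:ℝ) / ((n:ℝ) + 1) := by
                gcongr
      _ = (q:ℝ) * (K * q / ((n:ℝ) + 1)) := by
          rw [Finset.sum_const, Finset.card_range, nsmul_eq_mul]
      _ = K * q * q / ((n:ℝ) + 1) := by ring
  have est1 : |y n - (S m - S n) / q| < ε / 2 := by
    have heq : y n - (S m - S n) / q = -((S m - S n - (q:ℝ) * y n) / q) := by
      field_simp
      ring
    rw [heq, abs_neg, abs_div, abs_of_pos hqpos]
    have h1 : |S m - S n - (q:ℝ) * y n| / q ≤ K * q / ((n:ℝ) + 1) := by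
      rw [div_le_iff₀ hqpos]
      calc |S m - S n - (q:ℝ)*y n| ≤ K * q * q / ((n:ℝ)+1) := key2
        _ = K * q / ((n:ℝ)+1) * q := by ring
    have h2 : K * (q:ℝ) / ((n:ℝ)+1) ≤ K * δ + K / ((n:ℝ)+1) := by
      have h3 : K * (q:ℝ) ≤ K * (δ * ((n:ℝ)+1) + 1) := mul_le_mul_of_nonneg_left hqub hK
      have h4 : K * (δ * ((n:ℝ)+1) + 1) / ((n:ℝ)+1) = K * δ + K / ((n:ℝ)+1) := by
        field_simp
      calc K * (q:ℝ) / ((n:ℝ)+1) ≤ K * (δ * ((n:ℝ)+1) + 1) / ((n:ℝ)+1) := by gcongr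
        _ = K * δ + K / ((n:ℝ)+1) := h4
    have h5 : K * δ ≤ ε / 4 := by
      rw [hδdef, mul_comm, div_mul_eq_mul_div, div_le_div_iff₀ (by positivity) (by norm_num)]
      nlinarith [mul_nonneg hε.le hK]
    have h6 : K / ((n:ℝ)+1) < ε/4 := by
      have hcast : (N1:ℝ) ≤ (n:ℝ) := Nat.cast_le.2 hnN1
      have hn' : 4 * K / ε < (n:ℝ) + 1 := by linarith [hN1]
      rw [div_lt_iff₀ hε] at hn'
      rw [div_lt_div_iff₀ hn1 (by norm_num)]
      nlinarith
    linarith [h1.trans h2]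
  have hσn := hN2 n hnN2
  have hσm := hN2 m (by omega)
  rw [Real.dist_eq] at hσn hσm
  have heq2 : (S m - S n) / q - a
      = (((m:ℝ)+1)*(Ces y m - a) - ((n:ℝ)+1)*(Ces y n - a)) / q := by
    rw [hSces m, hSces n, hm]
    field_simp
    ring
  have est2 : |(S m - S n) / q - a| ≤ ε / 2 := by
    rw [heq2, abs_div, abs_of_pos hqpos, div_le_iff₀ hqpos]
    have hb1 : |((m:ℝ)+1)*(Ces y m - a) - ((n:ℝ)+1)*(Ces y n - a)|
        ≤ (((m:ℝ)+1) + ((n:ℝ)+1)) * ε'' := by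
      calc |((m:ℝ)+1)*(Ces y m - a) - ((n:ℝ)+1)*(Ces y n - a)|
          ≤ |((m:ℝ)+1)*(Ces y m - a)| + |((n:ℝ)+1)*(Ces y n - a)| := abs_sub _ _
        _ = ((m:ℝ)+1)*|Ces y m - a| + ((n:ℝ)+1)*|Ces y n - a| := by
            rw [abs_mul, abs_mul,
              abs_of_pos (show (0:ℝ) < (m:ℝ)+1 by positivity),
              abs_of_pos (show (0:ℝ) < (n:ℝ)+1 by positivity)]
        _ ≤ ((m:ℝ)+1)*ε'' + ((n:ℝ)+1)*ε'' :=
            add_le_add (mul_le_mul_of_nonneg_left hσm.le (by positivity))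
              (mul_le_mul_of_nonneg_left hσn.le (by positivity))
        _ = (((m:ℝ)+1) + ((n:ℝ)+1)) * ε'' := by ring
    have h7 : ((m:ℝ)+1) + ((n:ℝ)+1) ≤ C * q := by
      rw [hm, hCdef]
      have h8 : 2 * ((n:ℝ)+1) ≤ (2/δ) * q := by
        rw [div_mul_eq_mul_div, le_div_iff₀ hδ]
        nlinarith [hqlb]
      nlinarith
    have hb2 : (((m:ℝ)+1) + ((n:ℝ)+1)) * ε'' ≤ C * ε'' * q := by
      nlinarith [hε''.le, h7]
    have hCq : C * ε'' = ε / 2 := by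
      rw [hε''def]
      field_simp
    calc |((m:ℝ)+1)*(Ces y m - a) - ((n:ℝ)+1)*(Ces y n - a)|
        ≤ C * ε'' * q := hb1.trans hb2
      _ = ε / 2 * q := by rw [hCq]
  rw [Real.dist_eq]
  calc |y n - a| ≤ |y n - (S m - S n)/q| + |(S m - S n)/q - a| := abs_sub_le _ _ _
    _ < ε := by linarith


/-- For a bounded real sequence `z` and `a ∈ ℝ`, the iterated Cesàro means `C(Cz)`
converge to `a` if and only if the Cesàro means `Cz` converge to `a`.  In
particular, convergence of `C²z` implies convergence of `Cz`. -/
theorem stmt_15 (z : ℕ → ℝ) (hz : Bdd z) (a : ℝ) :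
    (Filter.Tendsto (Ces (Ces z)) Filter.atTop (nhds a) ↔
      Filter.Tendsto (Ces z) Filter.atTop (nhds a)) ∧
    ((∃ b : ℝ, Filter.Tendsto (Ces (Ces z)) Filter.atTop (nhds b)) →
      ∃ b : ℝ, Filter.Tendsto (Ces z) Filter.atTop (nhds b)) := by
  obtain ⟨M, hM⟩ := hz
  have hM0 : 0 ≤ M := (abs_nonneg _).trans (hM 0)
  have hK : (0:ℝ) ≤ 2 * M := by linarith
  have hdiff : ∀ n k : ℕ, |Ces z (n + k) - Ces z n| ≤ (2 * M) * k / ((n:ℝ) + 1) :=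
    fun n k => ces_diff hM n k
  refine ⟨⟨fun h => tauberian hK hdiff h, fun h => ces_tendsto h⟩, ?_⟩
  rintro ⟨b, hb⟩
  exact ⟨b, tauberian hK hdiff hb⟩
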